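/- arXiv:2211.13541 — 2 statements merged into one kernel-verified Lean document; each statement's English description precedes it below -/
import Mathlib

section
/- Let k ≥ 1 and n ≥ 2 be integers, let Ω > 0 and let 0 < σ ≤ m_min. Then there exist a positive discrete measure μ = Σ_{j=1}^n a_j δ_{y_j} with n distinct support points y_j ∈ ℝ^k and a_j > 0, and a positive discrete measure μ̂ = Σ_{j=1}^{n−1} â_j δ_{ŷ_j} with n−1 distinct support points ŷ_j ∈ ℝ^k and â_j > 0, such that sup_{ω∈ℝ^k, ‖ω‖₂≤Ω} |Fμ̂(ω) − Fμ(ω)| < σ, min_{1≤j≤n} a_j = m_min, and min_{p≠j} ‖y_p − y_j‖₂ = (2e^{−1}/Ω)·(σ/m_min)^{1/(2n−2)}. -/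
/-!
Put the points `t h e`, `t = 0, …, 2q` with `q = n - 1`, on a line along a unit vector `e` and
give the point `t h e` the mass `m_min · C(2q, t)`; `μ` consists of the even points and `μ̂` of the
odd ones. With `z = exp (i h ⟪e, ω⟫)` the binomial theorem gives `Fμ̂(ω) - Fμ(ω) = -m_min (z - 1)^{2q}`,
and `|z - 1| ≤ h ‖ω‖ ≤ h Ω`. The choice `h Ω = e⁻¹ (σ / m_min)^{1/(2q)}` makes the difference at most
`σ e^{-2q} < σ`, while consecutive points of `μ` are `2h` apart and the smallest mass is
`m_min C(2q, 0) = m_min`.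
-/

open Real Complex Finset
open scoped RealInnerProductSpace

theorem Finset.sum_range_two_mul_add_one {M : Type*} [AddCommMonoid M] (f : ℕ → M) (m : ℕ) :
    ∑ l ∈ range (2 * m + 1), f l =
      ∑ j ∈ range (m + 1), f (2 * j) + ∑ j ∈ range m, f (2 * j + 1) := by
  induction m with
  | zero => simp
  | succ m ih =>
    rw [show 2 * (m + 1) + 1 = 2 * m + 1 + 1 + 1 by ring, sum_range_succ, sum_range_succ, ih,
      sum_range_succ (fun j => f (2 * j)) (m + 1), sum_range_succ (fun j => f (2 * j + 1)) m,
      show 2 * m + 1 + 1 = 2 * (m + 1) by ring]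
    abel

theorem sub_one_pow_two_mul {R : Type*} [CommRing R] (z : R) (q : ℕ) :
    (z - 1) ^ (2 * q) = ∑ j ∈ range (q + 1), ((2 * q).choose (2 * j) : R) * z ^ (2 * j)
      - ∑ j ∈ range q, ((2 * q).choose (2 * j + 1) : R) * z ^ (2 * j + 1) := by
  rw [sub_pow, sum_range_two_mul_add_one, sub_eq_add_neg, ← sum_neg_distrib]
  congr 1 <;> refine sum_congr rfl fun j _ => ?_ <;> simp only [pow_add, pow_mul, neg_one_sq, one_pow, mul_one] <;> ring

variable {E : Type*} [NormedAddCommGroup E] [InnerProductSpace ℝ E]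

noncomputable def discreteFourier {ι : Type*} [Fintype ι] (a : ι → ℝ) (y : ι → E) (ω : E) :
    ℂ :=
  ∑ j, (a j : ℂ) * exp (I * (⟪y j, ω⟫ : ℝ))

noncomputable def linePoint (h : ℝ) (e : E) (t : ℕ) : E := ((t : ℝ) * h) • e

theorem exp_I_mul_inner_linePoint (h : ℝ) (e ω : E) (t : ℕ) :
    exp (I * (⟪linePoint h e t, ω⟫ : ℝ)) = exp (I * (h * ⟪e, ω⟫ : ℝ)) ^ t := by
  rw [← Complex.exp_nat_mul, linePoint, real_inner_smul_left]
  push_cast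
  ring_nf

theorem linePoint_injective {h : ℝ} {e : E} (hh : h ≠ 0) (he : e ≠ 0) :
    Function.Injective (linePoint h e) := fun s t hst => by
  simpa [linePoint, hh] using smul_left_injective ℝ he hst

theorem norm_linePoint_sub {h : ℝ} {e : E} (hh : 0 ≤ h) (he : ‖e‖ = 1) (s t : ℕ) :
    ‖linePoint h e s - linePoint h e t‖ = |(s : ℝ) - t| * h := by
  rw [linePoint, linePoint, ← sub_smul, ← sub_mul, norm_smul, he, mul_one, norm_mul,
    Real.norm_eq_abs, Real.norm_of_nonneg hh]

theorem discreteFourier_odd_sub_even (c h : ℝ) (e ω : E) (q : ℕ) :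
    discreteFourier (fun j : Fin q => c * (2 * q).choose (2 * j + 1))
        (fun j => linePoint h e (2 * j + 1)) ω
      - discreteFourier (fun j : Fin (q + 1) => c * (2 * q).choose (2 * j))
        (fun j => linePoint h e (2 * j)) ω
      = -c * (exp (I * (h * ⟪e, ω⟫ : ℝ)) - 1) ^ (2 * q) := by
  rw [sub_one_pow_two_mul, sum_range, sum_range, neg_mul, ← mul_neg, neg_sub, mul_sub, mul_sum,
    mul_sum]
  simp only [discreteFourier, exp_I_mul_inner_linePoint]
  push_cast
  simp only [mul_assoc]

theorem norm_discreteFourier_odd_sub_even_le {c h : ℝ} {e : E} (hc : 0 ≤ c) (hh : 0 ≤ h)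
    (he : ‖e‖ = 1) (ω : E) (q : ℕ) :
    ‖discreteFourier (fun j : Fin q => c * (2 * q).choose (2 * j + 1))
        (fun j => linePoint h e (2 * j + 1)) ω
      - discreteFourier (fun j : Fin (q + 1) => c * (2 * q).choose (2 * j))
        (fun j => linePoint h e (2 * j)) ω‖ ≤ c * (h * ‖ω‖) ^ (2 * q) := by
  rw [discreteFourier_odd_sub_even, norm_mul, norm_neg, norm_pow, Complex.norm_real,
    Real.norm_of_nonneg hc]
  gcongr
  calc ‖exp (I * (h * ⟪e, ω⟫ : ℝ)) - 1‖ ≤ ‖h * ⟪e, ω⟫‖ :=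
        Real.norm_exp_I_mul_ofReal_sub_one_le
    _ ≤ h * ‖ω‖ := by
      simpa [abs_of_nonneg hh, he] using mul_le_mul_of_nonneg_left (abs_real_inner_le_norm e ω) hh

theorem two_mul_le_norm_linePoint_two_mul_sub {h : ℝ} {e : E} (hh : 0 ≤ h) (he : ‖e‖ = 1)
    {s t : ℕ} (hst : s ≠ t) : 2 * h ≤ ‖linePoint h e (2 * s) - linePoint h e (2 * t)‖ := by
  have hst' : (1 : ℝ) ≤ |(s : ℝ) - t| := by
    exact_mod_cast Int.one_le_abs (sub_ne_zero.2 (Int.natCast_inj.not.2 hst))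
  rw [norm_linePoint_sub hh he]
  push_cast
  rw [← mul_sub, abs_mul, abs_two]
  nlinarith

theorem isLeast_range_mul_choose_two_mul {c : ℝ} (hc : 0 ≤ c) (q : ℕ) :
    IsLeast (Set.range fun j : Fin (q + 1) => c * (2 * q).choose (2 * j)) c := by
  refine ⟨⟨0, by simp⟩, ?_⟩
  rintro _ ⟨j, rfl⟩
  exact le_mul_of_one_le_right hc (Nat.one_le_cast.2 (Nat.choose_pos (by omega)))

theorem mul_rpow_inv_div_exp_one_pow_lt {m σ : ℝ} (hm : 0 < m) (hσ : 0 < σ) {N : ℕ}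
    (hN : N ≠ 0) : m * ((σ / m) ^ (N⁻¹ : ℝ) / Real.exp 1) ^ N < σ := by
  rw [div_pow, rpow_inv_natCast_pow (div_pos hσ hm).le hN, mul_div_assoc',
    mul_div_cancel₀ _ hm.ne']
  exact div_lt_self hσ (one_lt_pow₀ (one_lt_exp_iff.2 one_pos) hN)

/-- Theorem `thm:highdnumberlowerbound0`: lower bound for the computational
resolution limit to number detection in `k` dimensions. There exist a positive measure with
`n` supports in `ℝᵏ` and one with `n-1` supports whose Fourier data differ by less than `σ`
on the ball `‖ω‖ ≤ Ω`, with minimal amplitude `m_min` and minimal separation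
`(2e⁻¹/Ω)·(σ/m_min)^{1/(2n-2)}`. -/
theorem number_detection_lower_bound_multid
    (k n : ℕ) (hk : 1 ≤ k) (hn : 2 ≤ n)
    (Ω σ mmin : ℝ) (hΩ : 0 < Ω) (hσ : 0 < σ) (hσm : σ ≤ mmin) :
    ∃ (a : Fin n → ℝ) (y : Fin n → EuclideanSpace ℝ (Fin k))
      (b : Fin (n - 1) → ℝ) (yh : Fin (n - 1) → EuclideanSpace ℝ (Fin k)),
      (∀ j, 0 < a j) ∧ Function.Injective y ∧
      (∀ j, 0 < b j) ∧ Function.Injective yh ∧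
      (∀ ω : EuclideanSpace ℝ (Fin k), ‖ω‖ ≤ Ω →
        ‖(∑ j, (b j : ℂ) * Complex.exp (Complex.I * (⟪yh j, ω⟫ : ℝ)))
          - ∑ j, (a j : ℂ) * Complex.exp (Complex.I * (⟪y j, ω⟫ : ℝ))‖ < σ) ∧
      IsLeast (Set.range a) mmin ∧
      (∀ p j, p ≠ j →
        2 * (Real.exp 1)⁻¹ / Ω * (σ / mmin) ^ ((1 : ℝ) / (2 * (n : ℝ) - 2)) ≤ ‖y p - y j‖) ∧
      (∃ p j, p ≠ j ∧
        ‖y p - y j‖ = 2 * (Real.exp 1)⁻¹ / Ω * (σ / mmin) ^ ((1 : ℝ) / (2 * (n : ℝ) - 2))) := by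
  obtain ⟨q, rfl⟩ : ∃ q, n = q + 1 := ⟨n - 1, by omega⟩
  have hq : 2 * q ≠ 0 := by omega
  have hm : 0 < mmin := hσ.trans_le hσm
  rw [show (1 : ℝ) / (2 * ((q + 1 : ℕ) : ℝ) - 2) = ((2 * q : ℕ) : ℝ)⁻¹ by push_cast; ring]
  set r := (σ / mmin) ^ ((2 * q : ℕ) : ℝ)⁻¹
  set h := r / Real.exp 1 / Ω
  have hh : 0 < h := by positivity
  have hsep : 2 * (Real.exp 1)⁻¹ / Ω * r = 2 * h := by ring
  set e := EuclideanSpace.single (⟨0, hk⟩ : Fin k) (1 : ℝ)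
  have he : ‖e‖ = 1 := by simp [e]
  have h_even (m : ℕ) : Function.Injective fun j : Fin m => 2 * (j : ℕ) :=
    (mul_right_injective₀ two_ne_zero).comp Fin.val_injective
  have h_line := linePoint_injective hh.ne' (by simp [e] : e ≠ 0)
  refine ⟨fun j => mmin * (2 * q).choose (2 * j), fun j => linePoint h e (2 * j),
    fun j => mmin * (2 * q).choose (2 * j + 1), fun j => linePoint h e (2 * j + 1),
    fun j => mul_pos hm (Nat.cast_pos.2 (Nat.choose_pos (by omega))),
    h_line.comp (h_even _),
    fun j => mul_pos hm (Nat.cast_pos.2 (Nat.choose_pos (by omega))),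
    h_line.comp ((add_left_injective 1).comp (h_even _)),
    fun ω hω => ?_, isLeast_range_mul_choose_two_mul hm.le q,
    fun p j hpj =>
      hsep ▸ two_mul_le_norm_linePoint_two_mul_sub hh.le he (Fin.val_injective.ne hpj),
    ⟨⟨1, by omega⟩, 0, by simp [Fin.ext_iff], ?_⟩⟩
  · calc _ ≤ mmin * (h * ‖ω‖) ^ (2 * q) :=
          norm_discreteFourier_odd_sub_even_le hm.le hh.le he ω q
      _ ≤ mmin * (r / Real.exp 1) ^ (2 * q) := by
        gcongr
        calc h * ‖ω‖ ≤ h * Ω := by gcongr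
          _ = r / Real.exp 1 := div_mul_cancel₀ _ hΩ.ne'
      _ < σ := mul_rpow_inv_div_exp_one_pow_lt hm hσ hq
  · rw [hsep, norm_linePoint_sub hh.le he]
    norm_num
end

section
/- Let k ≥ 1 and n ≥ 2 be integers, Ω > 0, 0 < σ ≤ m_min, and set τ = (e^{−1}/Ω)·(σ/m_min)^{1/(2n−1)}. Let e₁ denote the first standard basis vector of ℝ^k. Then there exist a positive discrete measure μ = Σ_{j=1}^n a_j δ_{y_j} with a_j > 0 whose support points are exactly {(−(n−1/2)+2(j−1))τ·e₁ : j = 1,…,n} (i.e. (−(n−1/2)τ, 0,…,0), (−(n−5/2)τ, 0,…,0), …, ((n−3/2)τ, 0,…,0)), and a positive discrete measure μ̂ = Σ_{j=1}^n â_j δ_{ŷ_j} with â_j > 0 whose support points are exactly {(−(n−3/2)+2(j−1))τ·e₁ : j = 1,…,n}, such that sup_{ω∈ℝ^k, ‖ω‖₂≤Ω} |Fμ̂(ω) − Fμ(ω)| < σ and min_{1≤j≤n} a_j = m_min. -/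
/-!
Take `a_j = m_min · C(2n-1, 2j)` and `â_j = m_min · C(2n-1, 2j+1)`. With `θ = τ ω₁`, the
binomial theorem collapses the difference of the two Fourier transforms to
`-m_min e^{i(1/2-n)θ} (1 - e^{iθ})^{2n-1}`, whose modulus is at most
`m_min |θ|^{2n-1} ≤ m_min (τΩ)^{2n-1} = e^{-(2n-1)} σ < σ`.
-/

open Real Complex Finset
open scoped RealInnerProductSpace

theorem Finset.sum_range_two_mul {M : Type*} [AddCommMonoid M] (n : ℕ) (f : ℕ → M) :
    ∑ l ∈ range (2 * n), f l = ∑ j ∈ range n, (f (2 * j) + f (2 * j + 1)) := by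
  induction n with
  | zero => simp
  | succ n ih =>
    rw [mul_add, mul_one, sum_range_succ, sum_range_succ, sum_range_succ, ih, add_assoc]

theorem one_sub_pow_eq_sum_even_sub_odd {R : Type*} [CommRing R] (x : R) {m n : ℕ}
    (h : m + 1 = 2 * n) :
    (1 - x) ^ m = ∑ j : Fin n, ((m.choose (2 * j) : R) * x ^ (2 * (j : ℕ)) -
      (m.choose (2 * j + 1) : R) * x ^ (2 * (j : ℕ) + 1)) := by
  rw [sub_eq_neg_add, add_pow, h, sum_range_two_mul, ← Fin.sum_univ_eq_sum_range]
  refine Fintype.sum_congr _ _ fun j => ?_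
  rw [Even.neg_pow ⟨j, two_mul _⟩, Odd.neg_pow ⟨j, rfl⟩]
  simp only [one_pow, mul_one]
  ring

theorem sum_exp_odd_sub_sum_exp_even {m n : ℕ} (h : m + 1 = 2 * n) (c θ : ℝ) :
    ∑ j : Fin n, ((c * m.choose (2 * j + 1) : ℝ) : ℂ) *
        cexp (I * (((-(n : ℝ) + 3 / 2 + 2 * (j : ℝ)) * θ : ℝ) : ℂ)) -
      ∑ j : Fin n, ((c * m.choose (2 * j) : ℝ) : ℂ) *
        cexp (I * (((-(n : ℝ) + 1 / 2 + 2 * (j : ℝ)) * θ : ℝ) : ℂ)) =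
      -(c * cexp (I * (((-(n : ℝ) + 1 / 2) * θ : ℝ) : ℂ))) * (1 - cexp (I * θ)) ^ m := by
  have shift : ∀ (s : ℝ) (l : ℕ), s = -(n : ℝ) + 1 / 2 + l →
      cexp (I * ((s * θ : ℝ) : ℂ)) =
        cexp (I * (((-(n : ℝ) + 1 / 2) * θ : ℝ) : ℂ)) * cexp (I * θ) ^ l := by
    rintro s l rfl
    rw [← Complex.exp_nat_mul, ← Complex.exp_add]
    push_cast
    ring_nf
  rw [one_sub_pow_eq_sum_even_sub_odd _ h, mul_sum, ← sum_sub_distrib]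
  refine Fintype.sum_congr _ _ fun j => ?_
  rw [shift (-(n : ℝ) + 3 / 2 + 2 * (j : ℝ)) (2 * j + 1) (by push_cast; ring),
    shift (-(n : ℝ) + 1 / 2 + 2 * (j : ℝ)) (2 * j) (by push_cast; ring)]
  push_cast
  ring

theorem norm_sum_exp_odd_sub_sum_exp_even_le {m n : ℕ} (h : m + 1 = 2 * n) {c : ℝ} (hc : 0 ≤ c)
    (θ : ℝ) :
    ‖∑ j : Fin n, ((c * m.choose (2 * j + 1) : ℝ) : ℂ) *
        cexp (I * (((-(n : ℝ) + 3 / 2 + 2 * (j : ℝ)) * θ : ℝ) : ℂ)) -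
      ∑ j : Fin n, ((c * m.choose (2 * j) : ℝ) : ℂ) *
        cexp (I * (((-(n : ℝ) + 1 / 2 + 2 * (j : ℝ)) * θ : ℝ) : ℂ))‖ ≤ c * |θ| ^ m := by
  rw [sum_exp_odd_sub_sum_exp_even h, norm_mul, norm_neg, norm_mul, norm_exp_I_mul_ofReal,
    Complex.norm_of_nonneg hc, mul_one, norm_pow, norm_sub_rev]
  gcongr
  exact norm_exp_I_mul_ofReal_sub_one_le

theorem EuclideanSpace.inner_smul_single_one {ι : Type*} [Fintype ι] [DecidableEq ι] (c : ℝ)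
    (i : ι) (ω : EuclideanSpace ℝ ι) : ⟪c • EuclideanSpace.single i (1 : ℝ), ω⟫ = c * ω i := by
  rw [real_inner_smul_left, EuclideanSpace.inner_single_left, map_one, one_mul]

theorem EuclideanSpace.abs_div_mul_apply_le {ι : Type*} [Fintype ι] {c Ω : ℝ} (hc : 0 ≤ c)
    {ω : EuclideanSpace ℝ ι} (hω : ‖ω‖ ≤ Ω) (i : ι) : |c / Ω * ω i| ≤ c := by
  have hΩ : 0 ≤ Ω := (norm_nonneg ω).trans hω
  calc |c / Ω * ω i| = c / Ω * |ω i| := by rw [abs_mul, abs_of_nonneg (by positivity)]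
    _ ≤ c / Ω * Ω := by gcongr; exact (PiLp.norm_apply_le ω i).trans hω
    _ ≤ c := by
      rw [div_mul_eq_mul_div, mul_div_assoc]
      exact mul_le_of_le_one_right hc (div_self_le_one Ω)

theorem mul_pow_inv_exp_one_mul_rpow_inv_lt {σ c : ℝ} (hσ : 0 < σ) (hc : 0 < c) {m : ℕ}
    (hm : m ≠ 0) :
    c * ((rexp 1)⁻¹ * (σ / c) ^ (m⁻¹ : ℝ)) ^ m < σ := by
  rw [mul_pow, rpow_inv_natCast_pow (by positivity) hm, mul_left_comm, mul_div_cancel₀ _ hc.ne']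
  exact mul_lt_of_lt_one_left hσ
    (pow_lt_one₀ (by positivity) (inv_lt_one_of_one_lt₀ (one_lt_exp_iff.mpr one_pos)) hm)

/-- Theorem `thm:highdsupportlowerboundthm0`: lower bound for the computational
resolution limit to support recovery in `k` dimensions. With
`τ = (e⁻¹/Ω)(σ/m_min)^{1/(2n-1)}`, there are two positive measures with `n` supports each,
located on the first coordinate axis at the interleaved grids `(-(n-1/2)+2(j-1))τ·e₁` and
`(-(n-3/2)+2(j-1))τ·e₁`, whose Fourier data on the ball `‖ω‖ ≤ Ω` differ by less than `σ`,
and whose minimal amplitude is `m_min`. -/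
theorem support_recovery_lower_bound_multid
    (k n : ℕ) (hk : 1 ≤ k) (hn : 2 ≤ n)
    (Ω σ mmin : ℝ) (hσ : 0 < σ) (hσm : σ ≤ mmin)
    (τ : ℝ) (hτ : τ = (Real.exp 1)⁻¹ / Ω * (σ / mmin) ^ ((1 : ℝ) / (2 * (n : ℝ) - 1))) :
    ∃ a b : Fin n → ℝ,
      (∀ j, 0 < a j) ∧ (∀ j, 0 < b j) ∧
      (∀ ω : EuclideanSpace ℝ (Fin k), ‖ω‖ ≤ Ω →
        Norm.norm
          ((∑ j, (b j : ℂ) * Complex.exp (Complex.I *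
              (⟪((-(n : ℝ) + 3 / 2 + 2 * (j : ℝ)) * τ) •
                  EuclideanSpace.single (⟨0, by omega⟩ : Fin k) (1 : ℝ), ω⟫ : ℝ)))
            - ∑ j, (a j : ℂ) * Complex.exp (Complex.I *
              (⟪((-(n : ℝ) + 1 / 2 + 2 * (j : ℝ)) * τ) •
                  EuclideanSpace.single (⟨0, by omega⟩ : Fin k) (1 : ℝ), ω⟫ : ℝ)))
          < σ) ∧
      IsLeast (Set.range a) mmin := by
  have hmmin : 0 < mmin := hσ.trans_le hσm
  set m := 2 * n - 1
  have hm : m + 1 = 2 * n := by omega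
  have hchoose : ∀ l < 2 * n, (0 : ℝ) < m.choose l := fun l hl => mod_cast Nat.choose_pos (by omega)
  refine ⟨fun j => mmin * m.choose (2 * j), fun j => mmin * m.choose (2 * j + 1),
    fun j => mul_pos hmmin (hchoose _ (by omega)), fun j => mul_pos hmmin (hchoose _ (by omega)),
    fun ω hω => ?_, ⟨⟨0, by omega⟩, by simp⟩, ?_⟩
  · have hexp : (1 : ℝ) / (2 * (n : ℝ) - 1) = (m : ℝ)⁻¹ := by
      rw [one_div, Nat.cast_sub (by omega), Nat.cast_mul, Nat.cast_ofNat, Nat.cast_one]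
    simp only [EuclideanSpace.inner_smul_single_one, mul_assoc]
    calc _ ≤ mmin * |τ * ω ⟨0, by omega⟩| ^ m :=
          norm_sum_exp_odd_sub_sum_exp_even_le hm hmmin.le _
      _ ≤ mmin * ((rexp 1)⁻¹ * (σ / mmin) ^ (m⁻¹ : ℝ)) ^ m := by
          gcongr
          rw [hτ, ← hexp, div_mul_eq_mul_div]
          exact EuclideanSpace.abs_div_mul_apply_le (by positivity) hω _
      _ < σ := mul_pow_inv_exp_one_mul_rpow_inv_lt hσ hmmin (by omega)
  · rintro _ ⟨j, rfl⟩
    exact le_mul_of_one_le_right hmmin.le (mod_cast Nat.choose_pos (by omega))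
end
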